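/- arXiv:2404.17262 — 2 statements merged into one kernel-verified Lean document; each statement's English description precedes it below -/
import Mathlib

section
/- Let G be a connected, locally finite, vertex-transitive graph of polynomial growth, and let Γ ≤ Aut(G) be a subgroup acting transitively on the vertices of G with finite vertex stabilizers, containing a normal nilpotent subgroup N ⊴ Γ of finite index. Then there exists a finite normal subgroup H ⊴ Γ such that the image of N in Γ_{G/H} acts freely on the vertex set of the quotient graph G/H. -/
/-!
Take for `H` the subgroup generated by the elements of finite order of `N`; it is normal since `N`
is. As `Γ` acts transitively with finite stabilizers on a connected, locally finite graph, it is
finitely generated, and so is `N`. In a finitely generated nilpotent group the elements of finite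
order generate a finite subgroup, by induction along the lower central series: if `A` is its last
nontrivial (hence central) term, the preimage `M` of the finite subgroup generated by the torsion
of the quotient by `A` has a centre of finite index, so `[M, M]` is finite by Schur's theorem, and
the torsion of `M` lies in the preimage of the finite torsion subgroup of the finitely generated
abelian group `M ⧸ [M, M]`. That `M` is finitely generated comes from the same induction: every
subgroup of a finitely generated nilpotent group is finitely generated. Hence `H` is finite.
Finally, if `n ∈ N` maps an `H`-orbit `H v` to itself, then `n v = h v` with `h ∈ H`, so `h⁻¹ n`
lies in the finite stabilizer of `v`, has finite order and lies in `H`; thus `n ∈ H` acts trivially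
on `G/H`.
-/

namespace PercStmt

variable {V : Type*}

/-- A graph is vertex-transitive if any vertex can be mapped to any other by an automorphism. -/
def VertexTransitive (G : SimpleGraph V) : Prop :=
  ∀ u v : V, ∃ φ : G ≃g G, φ u = v

/-- `β_G(r)`: the number of vertices at distance at most `r` from `v`. -/
noncomputable def ballCard (G : SimpleGraph V) (v : V) (r : ℕ) : ℕ :=
  Nat.card {u : V | G.Reachable v u ∧ G.dist v u ≤ r}

/-- Polynomial growth: `β_G(n) ≤ C n^d` for some `C, d > 0`. -/
def PolyGrowth (G : SimpleGraph V) (v : V) : Prop :=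
  ∃ C d : ℝ, 0 < C ∧ 0 < d ∧ ∀ n : ℕ, 0 < n → (ballCard G v n : ℝ) ≤ C * (n : ℝ) ^ d

variable {Γ : Type*} [Group Γ] [MulAction Γ V]

/-- The kernel of the action of `Γ` on the set of `H`-orbits of `V`; the quotient
`Γ ⧸ actionKernel V Γ H` is the image `Γ_{G/H}` of `Γ` in the symmetry group of `G/H`. -/
def actionKernel (V : Type*) (Γ : Type*) [Group Γ] [MulAction Γ V] (H : Subgroup Γ) :
    Subgroup Γ where
  carrier := {g : Γ | ∀ v : V,
    Quotient.mk (MulAction.orbitRel H V) (g • v) = Quotient.mk (MulAction.orbitRel H V) v}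
  one_mem' := by intro v; rw [one_smul]
  mul_mem' := by
    intro a b ha hb v
    rw [mul_smul, ha (b • v), hb v]
  inv_mem' := by
    intro a ha v
    have h := ha (a⁻¹ • v)
    rw [smul_inv_smul] at h
    exact h.symm

end PercStmt

open scoped commutatorElement

namespace Subgroup

variable {G Q : Type*} [Group G] [Group Q]

theorem exists_finite_subset_map_closure_eq (f : G →* Q) {H : Subgroup G} (hmap : (H.map f).FG) :
    ∃ S ⊆ (H : Set G), S.Finite ∧ (closure S).map f = H.map f := by
  obtain ⟨T, hT, hTfin⟩ := (fg_iff _).1 hmap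
  simp_rw [MonoidHom.map_closure]
  refine Set.exists_subset_image_finite_and (p := fun T => closure T = H.map f) |>.1
    ⟨T, ?_, hTfin, hT⟩
  rw [← coe_map, ← hT]
  exact subset_closure

theorem fg_of_fg_map_of_fg_inf_ker (f : G →* Q) {H : Subgroup G} (hmap : (H.map f).FG)
    (hker : (H ⊓ f.ker).FG) : H.FG := by
  obtain ⟨S, hSH, hSfin, hS⟩ := exists_finite_subset_map_closure_eq f hmap
  obtain ⟨K, hK, hKfin⟩ := (fg_iff _).1 hker
  refine (fg_iff H).2 ⟨S ∪ K, le_antisymm ?_ fun h hh => ?_, hSfin.union hKfin⟩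
  · rw [closure_union, hK]
    exact sup_le ((closure_le H).2 hSH) inf_le_left
  · obtain ⟨y, hy, hyh⟩ : f h ∈ (closure S).map f := hS ▸ mem_map_of_mem f hh
    have hquot : y⁻¹ * h ∈ H ⊓ f.ker :=
      mem_inf.2 ⟨mul_mem (inv_mem ((closure_le H).2 hSH hy)) hh, by simp [hyh]⟩
    rw [closure_union, hK, ← mul_inv_cancel_left y h]
    exact mul_mem (mem_sup_left hy) (mem_sup_right hquot)

theorem normal_of_le_center {H : Subgroup G} (hH : H ≤ center G) : H.Normal :=
  ⟨fun a ha g => by rwa [mem_center_iff.1 (hH ha) g, mul_inv_cancel_right]⟩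

theorem isMulCommutative_of_le_center {H : Subgroup G} (hH : H ≤ center G) :
    IsMulCommutative H :=
  le_centralizer_iff_isMulCommutative.1 (hH.trans (center_le_centralizer _))

theorem FG.of_subgroupOf {A K : Subgroup G} (hK : (K.subgroupOf A).FG) (hKA : K ≤ A) :
    K.FG := by
  obtain ⟨S, hS, hSfin⟩ := (fg_iff _).1 hK
  refine (fg_iff K).2 ⟨A.subtype '' S, ?_, hSfin.image _⟩
  rw [← MonoidHom.map_closure, hS, map_subgroupOf_eq_of_le hKA]

theorem _root_.CommGroup.subgroup_fg {C : Type*} [CommGroup C] [Group.FG C] (H : Subgroup C) :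
    H.FG := by
  have : IsNoetherian ℤ (Additive C) :=
    have : Module.Finite ℤ (Additive C) := Module.Finite.iff_addGroup_fg.2 inferInstance
    isNoetherian_of_isNoetherianRing_of_finite ℤ (Additive C)
  rw [fg_iff_add_fg, ← AddSubgroup.toIntSubmodule_toAddSubgroup H.toAddSubgroup,
    ← Submodule.fg_iff_addSubgroup_fg]
  exact IsNoetherian.noetherian _

open scoped IsMulCommutative in
theorem fg_of_le_of_isMulCommutative {A K : Subgroup G} [IsMulCommutative A] (hA : A.FG)
    (hKA : K ≤ A) : K.FG :=
  have : Group.FG A := (Group.fg_iff_subgroup_fg A).2 hA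
  (CommGroup.subgroup_fg _).of_subgroupOf hKA

theorem commutatorElement_mem_of_mem_closure_right {F : Subgroup G} [hF : F.Normal] {g : G}
    {T : Set G} (h : ∀ t ∈ T, ⁅g, t⁆ ∈ F) {x : G} (hx : x ∈ closure T) : ⁅g, x⁆ ∈ F := by
  induction hx using closure_induction with
  | mem t ht => exact h t ht
  | one => simp
  | mul x y _ _ hx hy =>
    rw [commutatorElement_mul_right_eq_mul_conj, mul_assoc _ x, mul_assoc]
    exact mul_mem hx (hF.conj_mem _ hy x)
  | inv x _ hx =>
    rw [commutatorElement_inv_right, ← commutatorElement_inv]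
    simpa using hF.conj_mem _ (inv_mem hx) x⁻¹

theorem commutator_closure_le {F : Subgroup G} [F.Normal] {S T : Set G}
    (h : ∀ s ∈ S, ∀ t ∈ T, ⁅s, t⁆ ∈ F) : ⁅closure S, closure T⁆ ≤ F := by
  refine (commutator_le ..).2 fun x hx y hy => commutatorElement_mem_of_mem_closure_right
    (fun t ht => ?_) hy
  rw [← commutatorElement_inv]
  refine inv_mem (commutatorElement_mem_of_mem_closure_right (fun s hs => ?_) hx)
  rw [← commutatorElement_inv]
  exact inv_mem (h s hs t ht)

theorem lowerCentralSeries_le_center {n : ℕ}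
    (h : (⊤ : Subgroup G).lowerCentralSeries (n + 1) = ⊥) :
    (⊤ : Subgroup G).lowerCentralSeries n ≤ center G :=
  commutator_top_right_eq_bot_iff_le_center.1 h

theorem lowerCentralSeries_quotient_eq_bot (n : ℕ) :
    (⊤ : Subgroup (G ⧸ (⊤ : Subgroup G).lowerCentralSeries n)).lowerCentralSeries n = ⊥ := by
  rw [← map_top_of_surjective _ (QuotientGroup.mk'_surjective _), ← map_lowerCentralSeries,
    map_eq_bot_iff, QuotientGroup.ker_mk']

/-- `⁅P, ⊤⁆` is generated by the commutators of lifts of the generators of `P ⧸ A` with the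
generators of `G`. -/
theorem fg_commutator_top_of_fg_map [Group.FG G] {P A : Subgroup G} [A.Normal]
    (hAc : A ≤ center G) (hPA : ⁅P, ⊤⁆ ≤ A) (hP : (P.map (QuotientGroup.mk' A)).FG) :
    (⁅P, ⊤⁆ : Subgroup G).FG := by
  obtain ⟨S, hSP, hSfin, hS⟩ := exists_finite_subset_map_closure_eq _ hP
  obtain ⟨Y, hY, hYfin⟩ := Group.fg_iff.1 ‹Group.FG G›
  set F := closure (Set.image2 (⁅·, ·⁆) S Y)
  have hFP : F ≤ ⁅P, ⊤⁆ := (closure_le _).2 <| by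
    rintro _ ⟨s, hs, y, -, rfl⟩
    exact commutator_mem_commutator (hSP hs) (mem_top y)
  have : F.Normal := normal_of_le_center ((hFP.trans hPA).trans hAc)
  have hPS : P ≤ closure (S ∪ A) := fun p hp => by
    obtain ⟨y, hy, hyp⟩ : QuotientGroup.mk' A p ∈ (closure S).map _ := hS ▸ mem_map_of_mem _ hp
    rw [← mul_inv_cancel_left y p]
    exact mul_mem (closure_mono Set.subset_union_left hy)
      (subset_closure (Or.inr (QuotientGroup.eq.1 hyp)))
  have hPF : ⁅P, ⊤⁆ ≤ F := calc
    ⁅P, ⊤⁆ ≤ ⁅closure (S ∪ A), closure Y⁆ := commutator_mono hPS hY.ge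
    _ ≤ F := commutator_closure_le fun s hs y hy => hs.elim
      (fun hs => subset_closure ⟨s, hs, y, hy, rfl⟩)
      (fun hs => by
        rw [commutatorElement_eq_one_iff_mul_comm.2 (mem_center_iff.1 (hAc hs) y).symm]
        exact one_mem F)
  rw [le_antisymm hPF hFP]
  exact (fg_iff F).2 ⟨_, rfl, hSfin.image2 _ hYfin⟩

theorem fg_of_lowerCentralSeries_eq_bot (n : ℕ) :
    ∀ {G : Type*} [Group G] [Group.FG G], (⊤ : Subgroup G).lowerCentralSeries n = ⊥ →
      ∀ H : Subgroup G, H.FG := by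
  induction n with
  | zero =>
    intro G _ _ hG H
    rw [eq_bot_iff.2 (hG ▸ le_top : H ≤ ⊥)]
    exact FG.bot
  | succ n ih =>
    intro G _ _ hG H
    set A := (⊤ : Subgroup G).lowerCentralSeries n
    have hAc : A ≤ center G := lowerCentralSeries_le_center hG
    have hQ := ih (lowerCentralSeries_quotient_eq_bot (G := G) n)
    have hA : A.FG := by
      cases n with
      | zero => exact Group.fg_def.1 ‹_›
      | succ m => exact fg_commutator_top_of_fg_map hAc le_rfl (hQ _)
    have : IsMulCommutative A := isMulCommutative_of_le_center hAc
    refine fg_of_fg_map_of_fg_inf_ker (QuotientGroup.mk' A) (hQ _) ?_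
    rw [QuotientGroup.ker_mk']
    exact fg_of_le_of_isMulCommutative hA inf_le_right

end Subgroup

theorem Subgroup.isOfFinOrder_coe {G : Type*} [Group G] {H : Subgroup G} {x : H} :
    IsOfFinOrder (x : G) ↔ IsOfFinOrder x :=
  Submonoid.isOfFinOrder_coe (H := H.toSubmonoid)

theorem CommGroup.finite_torsion (C : Type*) [CommGroup C] [Group.FG C] :
    Finite (torsion C) :=
  have : Group.FG (torsion C) := (Group.fg_iff_subgroup_fg _).2 (subgroup_fg _)
  finite_of_fg_isMulTorsion _ fun x => Subgroup.isOfFinOrder_coe.1 x.2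

theorem MonoidHom.finite_preimage {G Q : Type*} [Group G] [Group Q] (f : G →* Q)
    [Finite f.ker] {s : Set Q} (hs : s.Finite) : (f ⁻¹' s).Finite := by
  refine hs.preimage' fun q _ => ?_
  obtain hq | ⟨g, hg⟩ := (f ⁻¹' {q}).eq_empty_or_nonempty
  · simp [hq]
  refine ((Set.toFinite (f.ker : Set G)).image (g * ·)).subset fun x hx => ⟨g⁻¹ * x, ?_, by simp⟩
  simp_all [MonoidHom.mem_ker]

namespace Subgroup

variable {G : Type*} [Group G]

theorem commutatorElement_mul_right_of_mem_center {z : G} (hz : z ∈ center G) (a b : G) :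
    ⁅a, b * z⁆ = ⁅a, b⁆ := by
  rw [commutatorElement_mul_right_eq_mul_conj,
    commutatorElement_eq_one_iff_mul_comm.2 (mem_center_iff.1 hz a), mul_one, mul_inv_cancel_right]

theorem commutatorElement_mul_left_of_mem_center {z : G} (hz : z ∈ center G) (a b : G) :
    ⁅a * z, b⁆ = ⁅a, b⁆ := by
  rw [← commutatorElement_inv, commutatorElement_mul_right_of_mem_center hz, commutatorElement_inv]

theorem finite_commutatorSet_of_finiteIndex_center [(center G).FiniteIndex] :
    Finite (commutatorSet G) := by
  refine Set.Finite.subset (Set.finite_range fun p : (G ⧸ center G) × (G ⧸ center G) =>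
    ⁅p.1.out, p.2.out⁆) ?_
  rintro _ ⟨a, b, rfl⟩
  obtain ⟨z, hz⟩ := QuotientGroup.mk_out_eq_mul (center G) a
  obtain ⟨w, hw⟩ := QuotientGroup.mk_out_eq_mul (center G) b
  refine ⟨((a : G ⧸ center G), (b : G ⧸ center G)), ?_⟩
  simp only [hz, hw, commutatorElement_mul_left_of_mem_center z.2,
    commutatorElement_mul_right_of_mem_center w.2]

theorem finite_closure_isOfFinOrder_of_finiteIndex_center [Group.FG G] [(center G).FiniteIndex] :
    (closure {g : G | IsOfFinOrder g} : Set G).Finite := by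
  have := finite_commutatorSet_of_finiteIndex_center (G := G)
  -- Schur's theorem makes `commutator G` finite.
  have : Finite (Abelianization.of (G := G)).ker := by
    rw [Abelianization.ker_of]; infer_instance
  have : Group.FG (Abelianization G) := inferInstanceAs (Group.FG (G ⧸ _root_.commutator G))
  have := CommGroup.finite_torsion (Abelianization G)
  refine (Abelianization.of.finite_preimage
    (Set.toFinite (CommGroup.torsion (Abelianization G) : Set _))).subset ?_
  exact (closure_le ((CommGroup.torsion _).comap _)).2 fun g hg => Abelianization.of.isOfFinOrder hg

theorem subgroupOf_le_center {A M : Subgroup G} (hA : A ≤ center G) :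
    A.subgroupOf M ≤ center M := fun _ hx =>
  mem_center_iff.2 fun g => Subtype.ext (mem_center_iff.1 (hA hx) g)

theorem finite_closure_isOfFinOrder_of_lowerCentralSeries_eq_bot (n : ℕ) :
    ∀ {G : Type*} [Group G] [Group.FG G], (⊤ : Subgroup G).lowerCentralSeries n = ⊥ →
      (closure {g : G | IsOfFinOrder g} : Set G).Finite := by
  induction n with
  | zero =>
    intro G _ _ hG
    rw [eq_bot_iff.2 (hG ▸ le_top : closure _ ≤ ⊥), coe_bot]
    exact Set.finite_singleton 1
  | succ n ih =>
    intro G _ _ hG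
    set A := (⊤ : Subgroup G).lowerCentralSeries n
    set π := QuotientGroup.mk' A
    have hQ := ih (lowerCentralSeries_quotient_eq_bot (G := G) n)
    set M := (closure {q : G ⧸ A | IsOfFinOrder q}).comap π
    have : Group.FG M := (Group.fg_iff_subgroup_fg M).2 (fg_of_lowerCentralSeries_eq_bot _ hG M)
    have : (A.subgroupOf M).FiniteIndex := by
      have : Finite (M.map π) := (hQ.subset (map_comap_le _ _)).to_subtype
      refine ⟨?_⟩
      rw [← relIndex, ← QuotientGroup.ker_mk' A, relIndex_ker]
      exact Nat.card_pos.ne'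
    have : (center M).FiniteIndex :=
      finiteIndex_of_le (subgroupOf_le_center (lowerCentralSeries_le_center hG))
    refine ((finite_closure_isOfFinOrder_of_finiteIndex_center (G := M)).image M.subtype).subset ?_
    rw [← coe_map, SetLike.coe_subset_coe, closure_le]
    intro g hg
    have hgM : g ∈ M := subset_closure (π.isOfFinOrder hg)
    exact ⟨⟨g, hgM⟩, subset_closure (isOfFinOrder_coe.1 hg), rfl⟩

theorem finite_closure_isOfFinOrder [Group.FG G] [Group.IsNilpotent G] :
    (closure {g : G | IsOfFinOrder g} : Set G).Finite :=
  have ⟨n, hn⟩ := nilpotent_iff_lowerCentralSeries.1 ‹_›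
  finite_closure_isOfFinOrder_of_lowerCentralSeries_eq_bot n hn

theorem closure_normal_of_conj_mem {s : Set G} (hs : ∀ g : G, ∀ x ∈ s, g * x * g⁻¹ ∈ s) :
    (closure s).Normal :=
  normalizer_eq_top_iff.1 <| eq_top_iff.2 fun g _ =>
    normalizer_le_normalizer_closure s <| mem_set_normalizer_iff.2 fun x =>
      ⟨hs g x, fun hx => by simpa [mul_assoc] using hs g⁻¹ _ hx⟩

theorem normal_closure_setOf_mem_isOfFinOrder {N : Subgroup G} (hN : N.Normal) :
    (closure {g | g ∈ N ∧ IsOfFinOrder g}).Normal :=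
  closure_normal_of_conj_mem fun g _ hx =>
    ⟨hN.conj_mem _ hx.1 g, (MulAut.conj g).toMonoidHom.isOfFinOrder hx.2⟩

theorem finite_closure_setOf_mem_isOfFinOrder {N : Subgroup G} [Group.FG N]
    [Group.IsNilpotent N] : (closure {g | g ∈ N ∧ IsOfFinOrder g} : Set G).Finite := by
  have : {g | g ∈ N ∧ IsOfFinOrder g} = N.subtype '' {g : N | IsOfFinOrder g} := by
    ext g
    exact ⟨fun ⟨hg, hgt⟩ => ⟨⟨g, hg⟩, isOfFinOrder_coe.1 hgt, rfl⟩,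
      by rintro ⟨g, hgt, rfl⟩; exact ⟨g.2, isOfFinOrder_coe.2 hgt⟩⟩
  rw [this, ← MonoidHom.map_closure, coe_map]
  exact finite_closure_isOfFinOrder.image _

end Subgroup

theorem MulAction.finite_preimage_smul {Γ α : Type*} [Group Γ] [MulAction Γ α] {a : α}
    (ha : (MulAction.stabilizer Γ a : Set Γ).Finite) {s : Set α} (hs : s.Finite) :
    ((· • a) ⁻¹' s : Set Γ).Finite := by
  refine hs.preimage' fun b _ => ?_
  obtain hb | ⟨g, hg⟩ := ((· • a) ⁻¹' {b} : Set Γ).eq_empty_or_nonempty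
  · simp [hb]
  refine (ha.image (g * ·)).subset fun x hx => ⟨g⁻¹ * x, ?_, by simp⟩
  simp_all [mul_smul, inv_smul_eq_iff]

theorem SimpleGraph.Connected.group_fg_of_finite_stabilizer {V Γ : Type*} [Group Γ] [MulAction Γ V]
    {G : SimpleGraph V} (hG : G.Connected) (v₀ : V) [Finite (G.neighborSet v₀)]
    (hadj : ∀ (g : Γ) {u v : V}, G.Adj u v → G.Adj (g • u) (g • v))
    (htrans : ∀ u v : V, ∃ g : Γ, g • u = v)
    (hstab : (MulAction.stabilizer Γ v₀ : Set Γ).Finite) : Group.FG Γ := by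
  set S : Set Γ := (· • v₀) ⁻¹' insert v₀ (G.neighborSet v₀)
  refine Group.fg_iff.2 ⟨S, eq_top_iff.2 fun g _ => ?_,
    MulAction.finite_preimage_smul hstab (Set.toFinite _)⟩
  have key : ∀ u, Relation.ReflTransGen G.Adj v₀ u → ∀ g : Γ, g • v₀ = u →
      g ∈ Subgroup.closure S := by
    intro u hu
    induction hu with
    | refl => exact fun g hg => Subgroup.subset_closure (Or.inl hg)
    | @tail b c _ hbc ih =>
      intro g hg
      obtain ⟨k, hk⟩ := htrans v₀ b
      have hstep : k⁻¹ * g ∈ S := by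
        have hadj' := hadj k⁻¹ hbc
        rw [← hk, inv_smul_smul] at hadj'
        exact Or.inr (show G.Adj v₀ ((k⁻¹ * g) • v₀) by rwa [mul_smul, hg])
      rw [← mul_inv_cancel_left k g]
      exact mul_mem (ih k hk) (Subgroup.subset_closure hstep)
  exact key _ ((SimpleGraph.reachable_iff_reflTransGen _ _).1 (hG.preconnected _ _)) g rfl

namespace PercStmt

variable {V Γ : Type*} [Group Γ] [MulAction Γ V] {H : Subgroup Γ}

theorem mk_smul_eq_mk_smul_of_normal (hH : H.Normal) (g : Γ) {u w : V}
    (huw : Quotient.mk (MulAction.orbitRel H V) u = Quotient.mk _ w) :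
    Quotient.mk (MulAction.orbitRel H V) (g • u) = Quotient.mk _ (g • w) := by
  obtain ⟨⟨h, hh⟩, rfl⟩ := Quotient.exact huw
  exact Quotient.sound ⟨⟨g * h * g⁻¹, hH.conj_mem h hh g⟩, by simp [mul_smul]⟩

theorem le_actionKernel : H ≤ actionKernel V Γ H := fun h hh _ =>
  Quotient.sound ⟨⟨h, hh⟩, rfl⟩

theorem actionKernel_normal (hH : H.Normal) : (actionKernel V Γ H).Normal :=
  ⟨fun k hk g v => by
    simpa [mul_smul] using mk_smul_eq_mk_smul_of_normal hH g (hk (g⁻¹ • v))⟩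

theorem mk_smul_eq_of_inv_mul_mem_actionKernel (hH : H.Normal) {g n : Γ}
    (hgn : g⁻¹ * n ∈ actionKernel V Γ H) {v : V}
    (hv : Quotient.mk (MulAction.orbitRel H V) (g • v) = Quotient.mk _ v) :
    Quotient.mk (MulAction.orbitRel H V) (n • v) = Quotient.mk _ v := by
  rw [← mul_inv_cancel_left g n, mul_smul, mk_smul_eq_mk_smul_of_normal hH g (hgn v), hv]

theorem mem_of_mk_smul_eq {N : Subgroup Γ} (hHN : H ≤ N)
    (htor : ∀ g ∈ N, IsOfFinOrder g → g ∈ H) {n : Γ} (hn : n ∈ N) {v : V}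
    (hstab : (MulAction.stabilizer Γ v : Set Γ).Finite)
    (hv : Quotient.mk (MulAction.orbitRel H V) (n • v) = Quotient.mk _ v) : n ∈ H := by
  obtain ⟨⟨h, hh⟩, hhv⟩ := Quotient.exact hv
  change h • v = n • v at hhv
  have : Finite (MulAction.stabilizer Γ v) := hstab.to_subtype
  have hfix : h⁻¹ * n ∈ MulAction.stabilizer Γ v := by
    rw [MulAction.mem_stabilizer_iff, mul_smul, ← hhv, inv_smul_smul]
  have := htor _ (mul_mem (inv_mem (hHN hh)) hn)
    (Subgroup.isOfFinOrder_coe.2 (isOfFinOrder_of_finite (⟨_, hfix⟩ : MulAction.stabilizer Γ v)))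
  rw [← mul_inv_cancel_left h n]
  exact mul_mem hh this

theorem stmt6_general {V Γ : Type*} [Group Γ] [MulAction Γ V] (G : SimpleGraph V)
    (hconn : G.Connected) (hlf : G.LocallyFinite)
    (haut : ∀ (g : Γ) (u v : V), G.Adj (g • u) (g • v) ↔ G.Adj u v)
    (htrans : ∀ u v : V, ∃ g : Γ, g • u = v)
    (hstab : ∀ v : V, {g : Γ | g • v = v}.Finite)
    (N : Subgroup Γ) (hNnormal : N.Normal) (hNnilp : Group.IsNilpotent N)
    (hNfi : N.FiniteIndex) :
    ∃ (H : Subgroup Γ), H.Normal ∧ (H : Set Γ).Finite ∧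
      ∃ hK : (actionKernel V Γ H).Normal,
        letI := hK
        ∀ x : Γ ⧸ actionKernel V Γ H,
          x ∈ Subgroup.map (QuotientGroup.mk' (actionKernel V Γ H)) N →
          (∃ g : Γ, (QuotientGroup.mk g : Γ ⧸ actionKernel V Γ H) = x ∧
            ∃ v : V, Quotient.mk (MulAction.orbitRel H V) (g • v) =
              Quotient.mk (MulAction.orbitRel H V) v) →
          x = 1 := by
  obtain ⟨v₀⟩ := hconn.nonempty
  have := hlf v₀
  have : Group.FG Γ :=
    hconn.group_fg_of_finite_stabilizer v₀ (fun g u v => (haut g u v).2) htrans (hstab v₀)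
  have : Group.FG N := Subgroup.fg_of_index_ne_zero N
  have hH := Subgroup.normal_closure_setOf_mem_isOfFinOrder hNnormal
  have hK := actionKernel_normal (V := V) hH
  refine ⟨_, hH, Subgroup.finite_closure_setOf_mem_isOfFinOrder, hK, ?_⟩
  rintro _ ⟨n, hn, rfl⟩ ⟨g, hg, v, hv⟩
  have hnv := mk_smul_eq_of_inv_mul_mem_actionKernel hH (QuotientGroup.eq.1 hg) hv
  have hnH := mem_of_mk_smul_eq ((Subgroup.closure_le N).2 fun _ hg => hg.1)
    (fun _ hg hgt => Subgroup.subset_closure (⟨hg, hgt⟩ : _ ∧ _)) hn (hstab v) hnv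
  exact (QuotientGroup.eq_one_iff n).2 (le_actionKernel hnH)

/-- Let `G` be a connected, locally finite, vertex-transitive graph of
polynomial growth, and let `Γ ≤ Aut(G)` act transitively with finite vertex stabilizers,
containing a normal nilpotent subgroup `N` of finite index.  Then there is a finite normal
subgroup `H ⊴ Γ` such that the image of `N` in `Γ_{G/H} = Γ ⧸ actionKernel V Γ H` acts
freely on the set of `H`-orbits (the vertex set of `G/H`). -/
theorem stmt6 {V Γ : Type*} [Group Γ] [MulAction Γ V] (G : SimpleGraph V) (v₀ : V)
    (hconn : G.Connected) (hlf : G.LocallyFinite)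
    (htransG : VertexTransitive G)
    (hfaithful : ∀ g : Γ, (∀ v : V, g • v = v) → g = 1)
    (haut : ∀ (g : Γ) (u v : V), G.Adj (g • u) (g • v) ↔ G.Adj u v)
    (htrans : ∀ u v : V, ∃ g : Γ, g • u = v)
    (hstab : ∀ v : V, {g : Γ | g • v = v}.Finite)
    (hpoly : PolyGrowth G v₀)
    (N : Subgroup Γ) (hNnormal : N.Normal) (hNnilp : Group.IsNilpotent N)
    (hNfi : N.FiniteIndex) :
    ∃ (H : Subgroup Γ), H.Normal ∧ (H : Set Γ).Finite ∧
      ∃ hK : (actionKernel V Γ H).Normal,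
        letI := hK
        ∀ x : Γ ⧸ actionKernel V Γ H,
          x ∈ Subgroup.map (QuotientGroup.mk' (actionKernel V Γ H)) N →
          (∃ g : Γ, (QuotientGroup.mk g : Γ ⧸ actionKernel V Γ H) = x ∧
            ∃ v : V, Quotient.mk (MulAction.orbitRel H V) (g • v) =
              Quotient.mk (MulAction.orbitRel H V) v) →
          x = 1 :=
  stmt6_general G hconn hlf haut htrans hstab N hNnormal hNnilp hNfi

end PercStmt
end

section
/- Let Γ be a group with a finite symmetric generating set S containing the identity, let H ≤ Γ be a subgroup of finite index, let k be a positive integer, and let X ⊆ S^k be a set of right-coset representatives for H in Γ (i.e., every right coset Hg contains exactly one element of X). Let m > 2k be an integer. Then for every integer r ≥ 1 one has S^{r(m-2k)} ⊆ (H ∩ S^m)^r · X. In particular, H ∩ S^m generates H, and #(S^{r(m-2k)}) ≤ [Γ : H] · #((H ∩ S^m)^r). -/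
open Pointwise

private lemma setPowFinite {Γ : Type*} [Group Γ] {S : Set Γ} (hSfin : S.Finite) :
    ∀ n : ℕ, (S ^ n : Set Γ).Finite := by
  intro n
  induction n with
  | zero => simp
  | succ n ih => rw [pow_succ]; exact ih.mul hSfin

private lemma powSubsetSubgroup {Γ : Type*} [Group Γ] {A : Set Γ} {K : Subgroup Γ}
    (hA : A ⊆ K) : ∀ n : ℕ, A ^ n ⊆ (K : Set Γ) := by
  intro n
  induction n with
  | zero =>
    rintro a ha
    rw [pow_zero, Set.mem_one] at ha
    subst ha
    exact K.one_mem
  | succ n ih =>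
    rw [pow_succ]
    rintro _ ⟨a, ha, b, hb, rfl⟩
    exact K.mul_mem (ih ha) (hA hb)

/-- Let `Γ` be a group with a finite symmetric generating set `S`
containing the identity, let `H ≤ Γ` have finite index, and let `X ⊆ S^k` be a set of
right-coset representatives for `H` in `Γ`.  Then for every `m > 2k` and every `r ≥ 1` we
have `S^{r(m-2k)} ⊆ (H ∩ S^m)^r · X`; in particular `H ∩ S^m` generates `H` and
`#(S^{r(m-2k)}) ≤ [Γ:H] · #((H ∩ S^m)^r)`. -/
theorem stmt11 {Γ : Type*} [Group Γ] (S : Set Γ) (hSfin : S.Finite)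
    (hSsymm : ∀ s ∈ S, s⁻¹ ∈ S) (hSone : (1 : Γ) ∈ S)
    (hSgen : Subgroup.closure S = ⊤)
    (H : Subgroup Γ) (hHfi : H.FiniteIndex)
    (k : ℕ) (hk : 0 < k) (X : Set Γ) (hXS : X ⊆ S ^ k)
    (hXrep : ∀ g : Γ, ∃! x : Γ, x ∈ X ∧ x * g⁻¹ ∈ H)
    (m : ℕ) (hm : 2 * k < m) :
    (∀ r : ℕ, 1 ≤ r → S ^ (r * (m - 2 * k)) ⊆ ((H : Set Γ) ∩ S ^ m) ^ r * X) ∧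
    Subgroup.closure ((H : Set Γ) ∩ S ^ m) = H ∧
    (∀ r : ℕ, 1 ≤ r →
      Nat.card (S ^ (r * (m - 2 * k)) : Set Γ) ≤
        H.index * Nat.card ((((H : Set Γ) ∩ S ^ m) ^ r : Set Γ))) := by
  have hSinv : (S : Set Γ)⁻¹ = S := by
    ext s
    simp only [Set.mem_inv]
    exact ⟨fun h => by simpa using hSsymm _ h, fun h => hSsymm s h⟩
  have hpowinv : ∀ n : ℕ, (S ^ n : Set Γ)⁻¹ = S ^ n := by
    intro n
    induction n with
    | zero => simp
    | succ n ih => rw [pow_succ, mul_inv_rev, hSinv, ih, ← pow_succ', pow_succ]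
  have hmono : ∀ {a b : ℕ}, a ≤ b → (S ^ a : Set Γ) ⊆ S ^ b := fun h =>
    Set.pow_subset_pow_right hSone h
  -- Base case: r = 1
  have base : S ^ (m - 2 * k) ⊆ ((H : Set Γ) ∩ S ^ m) ^ 1 * X := by
    intro g hg
    obtain ⟨x, ⟨hxX, hxH⟩, _⟩ := hXrep g
    have hxinv : x⁻¹ ∈ S ^ k := by rw [← hpowinv k]; exact Set.inv_mem_inv.2 (hXS hxX)
    have hgx : g * x⁻¹ ∈ S ^ m := by
      have : g * x⁻¹ ∈ S ^ (m - 2 * k) * S ^ k := Set.mul_mem_mul hg hxinv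
      rw [← pow_add] at this
      exact hmono (by omega) this
    have hgxH : g * x⁻¹ ∈ H := by
      have := H.inv_mem hxH
      simpa using this
    have : g = (g * x⁻¹) * x := by group
    rw [this, pow_one]
    exact Set.mul_mem_mul ⟨hgxH, hgx⟩ hxX
  have key : ∀ r : ℕ, 1 ≤ r → S ^ (r * (m - 2 * k)) ⊆ ((H : Set Γ) ∩ S ^ m) ^ r * X := by
    intro r hr
    induction r with
    | zero => omega
    | succ n ih =>
      rcases Nat.eq_zero_or_pos n with h0 | hn
      · subst h0; simpa using base
      · intro g hg
        rw [show (n + 1) * (m - 2 * k) = n * (m - 2 * k) + (m - 2 * k) by ring,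
          pow_add] at hg
        obtain ⟨g', hg', s, hs, rfl⟩ := hg
        obtain ⟨p, hp, x, hx, rfl⟩ := ih hn hg'
        -- consider w = x * s
        obtain ⟨x', ⟨hx'X, hx'H⟩, _⟩ := hXrep (x * s)
        have hw : x * s ∈ S ^ (k + (m - 2 * k)) := by
          rw [pow_add]; exact Set.mul_mem_mul (hXS hx) hs
        have hx'inv : x'⁻¹ ∈ S ^ k := by
          rw [← hpowinv k]; exact Set.inv_mem_inv.2 (hXS hx'X)
        have hhS : (x * s) * x'⁻¹ ∈ S ^ m := by
          have : (x * s) * x'⁻¹ ∈ S ^ (k + (m - 2 * k)) * S ^ k :=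
            Set.mul_mem_mul hw hx'inv
          rw [← pow_add] at this
          exact hmono (by omega) this
        have hhH : (x * s) * x'⁻¹ ∈ H := by
          have := H.inv_mem hx'H
          simpa using this
        have heq : p * x * s = (p * ((x * s) * x'⁻¹)) * x' := by group
        show p * x * s ∈ _
        rw [heq]
        refine Set.mul_mem_mul ?_ hx'X
        rw [pow_succ]
        exact Set.mul_mem_mul hp ⟨hhH, hhS⟩
  refine ⟨key, ?_, ?_⟩
  · -- closure
    have hd : 0 < m - 2 * k := by omega
    apply le_antisymm
    · exact Subgroup.closure_le H |>.2 Set.inter_subset_left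
    · intro h hh
      -- h lies in some power of S
      have hex : ∀ g : Γ, ∃ n : ℕ, g ∈ S ^ n := by
        clear hh h
        intro h
        have : h ∈ Subgroup.closure S := by rw [hSgen]; trivial
        induction this using Subgroup.closure_induction with
        | mem s hs => exact ⟨1, by simpa using hs⟩
        | one => exact ⟨0, by simp⟩
        | mul a b _ _ ha hb =>
          obtain ⟨na, hna⟩ := ha
          obtain ⟨nb, hnb⟩ := hb
          exact ⟨na + nb, by rw [pow_add]; exact Set.mul_mem_mul hna hnb⟩
        | inv a _ ha =>
          obtain ⟨na, hna⟩ := ha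
          exact ⟨na, by rw [← hpowinv na]; exact Set.inv_mem_inv.2 hna⟩
      obtain ⟨n, hn⟩ := hex h
      have hle : n ≤ (n + 1) * (m - 2 * k) := by nlinarith
      have := key (n + 1) (by omega) (hmono hle hn)
      obtain ⟨p, hp, x, hx, rfl⟩ := this
      have hpK : p ∈ Subgroup.closure ((H : Set Γ) ∩ S ^ m) :=
        powSubsetSubgroup Subgroup.subset_closure (n + 1) hp
      have hpH : p ∈ H := powSubsetSubgroup Set.inter_subset_left (n + 1) hp
      have hxH : x ∈ H := by
        have : p⁻¹ * (p * x) ∈ H := H.mul_mem (H.inv_mem hpH) hh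
        simpa using this
      have hxS : x ∈ S ^ m := hmono (by omega) (hXS hx)
      exact Subgroup.mul_mem _ hpK (Subgroup.subset_closure ⟨hxH, hxS⟩)
  · -- cardinality
    intro r hr
    have hXcard : Nat.card X = H.index := by
      have hbij : Function.Bijective
          (fun x : X => QuotientGroup.mk (s := H) (x : Γ)⁻¹) := by
        constructor
        · rintro ⟨x, hx⟩ ⟨y, hy⟩ hxy
          simp only [Subtype.mk.injEq]
          have : x * y⁻¹ ∈ H := by
            have := QuotientGroup.eq.mp hxy
            simpa using this
          obtain ⟨z, hz, huniq⟩ := hXrep y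
          have h1 : x = z := huniq x ⟨hx, this⟩
          have h2 : y = z := huniq y ⟨hy, by simpa using H.one_mem⟩
          rw [h1, h2]
        · intro q
          obtain ⟨g, rfl⟩ := QuotientGroup.mk_surjective q
          obtain ⟨x, ⟨hxX, hxH⟩, _⟩ := hXrep g⁻¹
          refine ⟨⟨x, hxX⟩, ?_⟩
          simp only
          rw [QuotientGroup.eq]
          simpa using hxH
      rw [Nat.card_eq_of_bijective _ hbij, Subgroup.index]
    have hfin : ((((H : Set Γ) ∩ S ^ m) ^ r * X : Set Γ)).Finite := by
      apply Set.Finite.mul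
      · exact (setPowFinite hSfin (m * r)).subset
          (by
            rw [show m * r = r * m by ring]
            calc ((H : Set Γ) ∩ S ^ m) ^ r ⊆ (S ^ m) ^ r :=
                  Set.pow_subset_pow_left Set.inter_subset_right
              _ = S ^ (r * m) := by rw [← pow_mul, mul_comm]
              _ ⊆ S ^ (r * m) := subset_rfl)
      · exact (setPowFinite hSfin k).subset hXS
    calc Nat.card (S ^ (r * (m - 2 * k)) : Set Γ)
        ≤ Nat.card ((((H : Set Γ) ∩ S ^ m) ^ r * X : Set Γ)) :=
          Nat.card_mono hfin (key r hr)
      _ ≤ Nat.card ((((H : Set Γ) ∩ S ^ m) ^ r : Set Γ)) * Nat.card X :=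
          Set.natCard_mul_le
      _ = H.index * Nat.card ((((H : Set Γ) ∩ S ^ m) ^ r : Set Γ)) := by
          rw [hXcard, mul_comm]
end
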